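/- Let f_v(s) = (1/2)[ln(1+s) - ln(1-s)] on (-1,1). For every fixed a ∈ (-1,1) with |a| ≤ 1 - δ for some δ ∈ (0,1), there exist constants C₁ > 0 and C₂ > 0, independent of δ and a, such that f_v(s)·(s - a) ≥ C₁·δ·|f_v(s)| - C₂ for all s ∈ (-1,1). -/

import Mathlib

noncomputable def fv (s : ℝ) : ℝ := (1/2) * (Real.log (1 + s) - Real.log (1 - s))

lemma fv_neg (s : ℝ) : fv (-s) = - fv s := by
  unfold fv
  rw [show (1:ℝ) + -s = 1 - s by ring, show (1:ℝ) - -s = 1 + s by ring]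
  ring

lemma fv_nonneg {s : ℝ} (h0 : 0 ≤ s) (h1 : s < 1) : 0 ≤ fv s := by
  unfold fv
  have : Real.log (1 - s) ≤ Real.log (1 + s) :=
    Real.log_le_log (by linarith) (by linarith)
  linarith

lemma fv_key {s : ℝ} (h0 : 0 ≤ s) (h1 : s < 1) : fv s * (1 - s) ≤ 1 := by
  have hp : (0:ℝ) < 1 - s := by linarith
  have h2 : Real.log (1 + s) ≤ s := by
    have := Real.log_le_sub_one_of_pos (show (0:ℝ) < 1 + s by linarith)
    linarith
  have hl0 : 0 ≤ Real.log (1 + s) := Real.log_nonneg (by linarith)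
  have h3 : -Real.log (1 - s) * (1 - s) ≤ s := by
    have h4 : Real.log (1-s)⁻¹ ≤ (1-s)⁻¹ - 1 :=
      Real.log_le_sub_one_of_pos (by positivity)
    rw [Real.log_inv] at h4
    have h5 : ((1-s)⁻¹ - 1) * (1-s) = s := by field_simp; ring
    nlinarith [mul_le_mul_of_nonneg_right h4 hp.le]
  unfold fv
  nlinarith [mul_le_mul_of_nonneg_right h2 hp.le, mul_nonneg hl0 h0]

lemma fv_abs_key {s : ℝ} (hs : s ∈ Set.Ioo (-1:ℝ) 1) : |fv s| * (1 - |s|) ≤ 1 := by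
  obtain ⟨h1, h2⟩ := hs
  rcases le_or_gt 0 s with h | h
  · rw [abs_of_nonneg (fv_nonneg h h2), abs_of_nonneg h]
    exact fv_key h h2
  · have hn : 0 ≤ -s := by linarith
    have hn1 : -s < 1 := by linarith
    have : fv s = - fv (-s) := by rw [fv_neg]; ring
    rw [this, abs_neg, abs_of_nonneg (fv_nonneg hn hn1), abs_of_neg h]
    exact fv_key hn hn1

lemma fv_sign {s : ℝ} (hs : s ∈ Set.Ioo (-1:ℝ) 1) : 0 ≤ fv s * s := by
  obtain ⟨h1, h2⟩ := hs
  rcases le_or_gt 0 s with h | h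
  · exact mul_nonneg (fv_nonneg h h2) h
  · have hn : 0 ≤ -s := by linarith
    have hn1 : -s < 1 := by linarith
    have hf : fv s ≤ 0 := by
      have : fv s = - fv (-s) := by rw [fv_neg]; ring
      have := fv_nonneg hn hn1
      linarith
    exact mul_nonneg_of_nonpos_of_nonpos hf h.le

theorem stmt_0 :
    ∃ C₁ C₂ : ℝ, 0 < C₁ ∧ 0 < C₂ ∧
      ∀ δ ∈ Set.Ioo (0:ℝ) 1, ∀ a : ℝ, |a| ≤ 1 - δ →
        ∀ s ∈ Set.Ioo (-1:ℝ) 1, fv s * (s - a) ≥ C₁ * δ * |fv s| - C₂ := by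
  refine ⟨1, 1, one_pos, one_pos, ?_⟩
  intro δ hδ a ha s hs
  have h1 : fv s * s = |fv s| * |s| := by
    rw [← abs_mul, abs_of_nonneg (fv_sign hs)]
  have h2 := fv_abs_key hs
  have h3 : fv s * a ≤ |fv s| * (1 - δ) := by
    calc fv s * a ≤ |fv s * a| := le_abs_self _
      _ = |fv s| * |a| := abs_mul _ _
      _ ≤ |fv s| * (1 - δ) := mul_le_mul_of_nonneg_left ha (abs_nonneg _)
  nlinarith [abs_nonneg (fv s), abs_nonneg s]
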